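/- Let 1 < p < 2. There exists a constant C > 0, depending only on p, such that for every real inner product space E and all x, y ∈ E that are not both zero: ⟨‖x‖^{p−2}x − ‖y‖^{p−2}y, x − y⟩ ≥ C · (‖x‖ + ‖y‖)^{p−2} · ‖x − y‖². -/

import Mathlib

open MeasureTheory Metric Set Filter
open scoped Topology ENNReal Pointwise

noncomputable section

/-- `u` is a `C¹` weak solution of `div(|∇u|^{p-2}∇u) = f(u)` in the open set `Ω`:
`∫_Ω ‖∇u‖^{p-2}⟨∇u,∇ψ⟩ = -∫_Ω f(u)ψ` for all smooth compactly supported `ψ` with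
support in `Ω`.  (Since `p - 2` may be negative, `‖∇u‖^(p-2)` is real `rpow`, whose
convention `0 ^ (negative) = 0` encodes "`‖∇u‖^{p-2}∇u` is `0` where `∇u = 0`".) -/
def IsWeakSolution (p : ℝ) {E : Type*} [NormedAddCommGroup E] [InnerProductSpace ℝ E]
    [CompleteSpace E] [MeasureSpace E] (f : ℝ → ℝ) (Ω : Set E) (u : E → ℝ) : Prop :=
  ContDiffOn ℝ 1 u Ω ∧
  ∀ ψ : E → ℝ, ContDiff ℝ (⊤ : ℕ∞) ψ → HasCompactSupport ψ → tsupport ψ ⊆ Ω →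
    (∫ x in Ω, ‖gradient u x‖ ^ (p - 2) * (inner ℝ (gradient u x) (gradient ψ x) : ℝ))
      = -∫ x in Ω, f (u x) * ψ x

/-- `u` is a `C¹` weak subsolution of `div(|∇u|^{p-2}∇u) = f(u)` in `Ω`. -/
def IsWeakSubsolution (p : ℝ) {E : Type*} [NormedAddCommGroup E] [InnerProductSpace ℝ E]
    [CompleteSpace E] [MeasureSpace E] (f : ℝ → ℝ) (Ω : Set E) (u : E → ℝ) : Prop :=
  ContDiffOn ℝ 1 u Ω ∧
  ∀ ψ : E → ℝ, ContDiff ℝ (⊤ : ℕ∞) ψ → HasCompactSupport ψ → tsupport ψ ⊆ Ω → (∀ x, 0 ≤ ψ x) →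
    (∫ x in Ω, ‖gradient u x‖ ^ (p - 2) * (inner ℝ (gradient u x) (gradient ψ x) : ℝ))
      ≤ -∫ x in Ω, f (u x) * ψ x

/-- A large (boundary blow-up) solution on `Ω`. -/
def IsLargeSolution (p : ℝ) {E : Type*} [NormedAddCommGroup E] [InnerProductSpace ℝ E]
    [CompleteSpace E] [MeasureSpace E] (f : ℝ → ℝ) (Ω : Set E) (u : E → ℝ) : Prop :=
  IsWeakSolution p f Ω u ∧
  ∀ M : ℝ, 0 < M → ∃ δ > 0, ∀ x ∈ Ω, infDist x (frontier Ω) < δ → M ≤ u x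

/-- A one-dimensional large solution on `(-R, R)`: even, nondecreasing on `[0,R)`,
`(|φ'|^{p-2}φ')' = f(φ)` on `(-R,R)`, and `φ(t) → ∞` as `t → ±R`. -/
def IsOneDimLargeSolution (p : ℝ) (f : ℝ → ℝ) (R : ℝ) (φ : ℝ → ℝ) : Prop :=
  ContDiffOn ℝ 1 φ (Ioo (-R) R) ∧
  (∀ t : ℝ, φ (-t) = φ t) ∧
  MonotoneOn φ (Ico 0 R) ∧
  (∀ t ∈ Ioo (-R) R,
    HasDerivAt (fun s : ℝ => |deriv φ s| ^ (p - 2) * deriv φ s) (f (φ t)) t) ∧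
  Tendsto φ (nhdsWithin R (Iio R)) atTop ∧
  Tendsto φ (nhdsWithin (-R) (Ioi (-R))) atTop

/-- The Keller–Osserman condition (A1): with `F(t) = ∫₀^t f`, the integral
`∫_r^∞ F(s)^{-1/p} ds` is finite for every `r > 0`. -/
def KellerOsserman (p : ℝ) (f : ℝ → ℝ) : Prop :=
  ∀ r : ℝ, 0 < r →
    IntegrableOn (fun s : ℝ => (∫ τ in (0:ℝ)..s, f τ) ^ (-(1:ℝ) / p)) (Ioi r) volume

/-- The second component `X₂` of a point of `ℝ^m × ℝ^k`. -/
def proj2 {m k : ℕ} (x : EuclideanSpace ℝ (Fin m ⊕ Fin k)) : EuclideanSpace ℝ (Fin k) :=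
  WithLp.toLp 2 (fun j => x (Sum.inr j))

/-- The point `(X₁, X₂)` of `ℝ^m × ℝ^k`. -/
def prodMk {m k : ℕ} (X₁ : EuclideanSpace ℝ (Fin m)) (X₂ : EuclideanSpace ℝ (Fin k)) :
    EuclideanSpace ℝ (Fin m ⊕ Fin k) :=
  WithLp.toLp 2 (Sum.elim (fun i => X₁ i) (fun j => X₂ j))

/-- The finite cylinder `S_ℓ = (ℓ·ω₁) × ω₂`. -/
def cylF (m k : ℕ) (ω₁ : Set (EuclideanSpace ℝ (Fin m))) (ω₂ : Set (EuclideanSpace ℝ (Fin k)))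
    (ℓ : ℝ) : Set (EuclideanSpace ℝ (Fin m ⊕ Fin k)) :=
  {x | (WithLp.toLp 2 (fun i => x (Sum.inl i)) : EuclideanSpace ℝ (Fin m)) ∈ ℓ • ω₁ ∧
    (WithLp.toLp 2 (fun j => x (Sum.inr j)) : EuclideanSpace ℝ (Fin k)) ∈ ω₂}

/-- The infinite cylinder `S = ℝ^m × ω₂`. -/
def cylS (m k : ℕ) (ω₂ : Set (EuclideanSpace ℝ (Fin k))) :
    Set (EuclideanSpace ℝ (Fin m ⊕ Fin k)) :=
  {x | (WithLp.toLp 2 (fun j => x (Sum.inr j)) : EuclideanSpace ℝ (Fin k)) ∈ ω₂}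

end

-- tangent line inequality: q*a^(q-1)*(a-b) ≤ a^q - b^q for 0<q<1, 0<b≤a
lemma tangent (q a b : ℝ) (hq0 : 0 < q) (hq1 : q < 1) (hb : 0 < b) (hba : b ≤ a) :
    q * a ^ (q - 1) * (a - b) ≤ a ^ q - b ^ q := by
  have ha : 0 < a := lt_of_lt_of_le hb hba
  have h := Real.geom_mean_le_arith_mean2_weighted hq0.le (by linarith : (0:ℝ) ≤ 1 - q)
    (by positivity : (0:ℝ) ≤ b / a) zero_le_one (by ring)
  simp only [Real.one_rpow, mul_one] at h
  rw [Real.div_rpow hb.le ha.le] at h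
  have haq : 0 < a ^ q := Real.rpow_pos_of_pos ha q
  have h2 : b ^ q ≤ (q * (b / a) + (1 - q)) * a ^ q := by
    calc b ^ q = b ^ q / a ^ q * a ^ q := by field_simp
    _ ≤ _ := by apply mul_le_mul_of_nonneg_right h haq.le
  have hrw : a ^ (q - 1) = a ^ q / a := Real.rpow_sub_one ha.ne' q
  rw [hrw]
  have : (q * (b / a) + (1 - q)) * a ^ q = a ^ q - q * (a ^ q / a) * (a - b) := by
    field_simp; ring
  linarith [this ▸ h2]

-- key scalar lemma, case b ≤ a
lemma key' (p a b c : ℝ) (hp1 : 1 < p) (hp2 : p < 2) (hb : 0 ≤ b) (hba : b ≤ a)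
    (hc : |c| ≤ a * b) (hab : 0 < a + b) :
    (p - 1) * (a + b) ^ (p - 2) * (a ^ 2 - 2 * c + b ^ 2) ≤
      a ^ (p - 2) * a ^ 2 - (a ^ (p - 2) + b ^ (p - 2)) * c + b ^ (p - 2) * b ^ 2 := by
  have ha : 0 < a := by rcases lt_or_ge 0 a with h|h; exact h; nlinarith
  rcases eq_or_lt_of_le hb with hb0 | hb0
  · -- b = 0
    have hb0 : b = 0 := hb0.symm
    have hc0 : c = 0 := by rw [hb0, mul_zero] at hc; exact abs_eq_zero.mp (le_antisymm hc (abs_nonneg c))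
    subst hb0; subst hc0
    rw [Real.zero_rpow (by linarith : p - 2 ≠ 0)]
    have h1 : (0:ℝ) ≤ a ^ (p - 2) * a ^ 2 := by positivity
    have h2 := mul_nonneg (by linarith : (0:ℝ) ≤ 2 - p) h1
    simp only [add_zero, mul_zero, abs_zero]
    nlinarith [h1, h2]
  · -- b > 0
    have hcle : c ≤ a * b := le_of_abs_le hc
    have hA : 2 * (p - 1) * (a + b) ^ (p - 2) ≤ a ^ (p - 2) + b ^ (p - 2) := by
      have h1 : (a + b) ^ (p - 2) ≤ a ^ (p - 2) :=
        Real.rpow_le_rpow_of_nonpos ha (by linarith) (by linarith)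
      have h2 : (a + b) ^ (p - 2) ≤ b ^ (p - 2) :=
        Real.rpow_le_rpow_of_nonpos hb0 (by linarith) (by linarith)
      have h3 : (0:ℝ) ≤ (a + b) ^ (p - 2) := by positivity
      nlinarith
    have hT := tangent (p - 1) a b (by linarith) (by linarith) hb0 hba
    have hmono : (a + b) ^ (p - 2) ≤ a ^ (p - 2) :=
      Real.rpow_le_rpow_of_nonpos ha (by linarith) (by linarith)
    have hB' : (p - 1) * (a + b) ^ (p - 2) * (a - b) ≤ a ^ (p - 1) - b ^ (p - 1) := by
      have : (p - 1) * (a + b) ^ (p - 2) * (a - b) ≤ (p - 1) * a ^ (p - 2) * (a - b) :=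
        mul_le_mul_of_nonneg_right
          (mul_le_mul_of_nonneg_left hmono (by linarith)) (by linarith)
      have heq : a ^ (p - 1 - 1) = a ^ (p - 2) := by rw [show p - 1 - 1 = p - 2 by ring]
      calc (p - 1) * (a + b) ^ (p - 2) * (a - b) ≤ (p - 1) * a ^ (p - 2) * (a - b) := this
        _ = (p - 1) * a ^ (p - 1 - 1) * (a - b) := by rw [heq]
        _ ≤ a ^ (p - 1) - b ^ (p - 1) := hT
    have hB : (p - 1) * (a + b) ^ (p - 2) * (a - b) ^ 2 ≤ (a - b) * (a ^ (p - 1) - b ^ (p - 1)) := by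
      nlinarith [sq_nonneg (a - b)]
    have hap : a ^ (p - 1) = a ^ (p - 2) * a := by
      rw [show p - 1 = p - 2 + 1 by ring, Real.rpow_add_one ha.ne']
    have hbp : b ^ (p - 1) = b ^ (p - 2) * b := by
      rw [show p - 1 = p - 2 + 1 by ring, Real.rpow_add_one hb0.ne']
    rw [hap, hbp] at hB
    nlinarith [hA, hB, hcle]

lemma key (p a b c : ℝ) (hp1 : 1 < p) (hp2 : p < 2) (ha : 0 ≤ a) (hb : 0 ≤ b)
    (hc : |c| ≤ a * b) (hab : 0 < a + b) :
    (p - 1) * (a + b) ^ (p - 2) * (a ^ 2 - 2 * c + b ^ 2) ≤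
      a ^ (p - 2) * a ^ 2 - (a ^ (p - 2) + b ^ (p - 2)) * c + b ^ (p - 2) * b ^ 2 := by
  rcases le_total b a with h | h
  · exact key' p a b c hp1 hp2 hb h hc hab
  · have := key' p b a c hp1 hp2 ha h (by rwa [mul_comm]) (by rwa [add_comm])
    rw [add_comm b a] at this
    linarith


/-- For `1 < p < 2` there is `C > 0` depending only on `p` such that
`⟨‖x‖^{p-2}x - ‖y‖^{p-2}y, x - y⟩ ≥ C (‖x‖+‖y‖)^{p-2} ‖x-y‖²` for all `x, y` not both
zero, in every real inner product space.  (Here `‖z‖^{p-2}z` is `0` when `z = 0`, which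
is the `rpow` convention `0 ^ (p-2) = 0` since `p - 2 < 0`.) -/
theorem stmt14 (p : ℝ) (hp1 : 1 < p) (hp2 : p < 2) :
    ∃ C : ℝ, 0 < C ∧ ∀ (E : Type*) [NormedAddCommGroup E] [InnerProductSpace ℝ E]
      (x y : E), ¬(x = 0 ∧ y = 0) →
        C * (‖x‖ + ‖y‖) ^ (p - 2) * ‖x - y‖ ^ (2 : ℝ) ≤
          (inner ℝ (‖x‖ ^ (p - 2) • x - ‖y‖ ^ (p - 2) • y) (x - y) : ℝ) := by

  refine ⟨p - 1, by linarith, ?_⟩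
  intro E _ _ x y hxy
  have hab : 0 < ‖x‖ + ‖y‖ := by
    rcases lt_or_ge 0 (‖x‖ + ‖y‖) with h | h
    · exact h
    · exact absurd ⟨norm_eq_zero.mp (le_antisymm (by linarith [norm_nonneg x, norm_nonneg y])
        (norm_nonneg x)), norm_eq_zero.mp (le_antisymm (by
        linarith [norm_nonneg x, norm_nonneg y]) (norm_nonneg y))⟩ hxy
  have hc : |(inner ℝ x y : ℝ)| ≤ ‖x‖ * ‖y‖ := abs_real_inner_le_norm x y
  have hinner : (inner ℝ (‖x‖ ^ (p - 2) • x - ‖y‖ ^ (p - 2) • y) (x - y) : ℝ)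
      = ‖x‖ ^ (p - 2) * ‖x‖ ^ 2 - (‖x‖ ^ (p - 2) + ‖y‖ ^ (p - 2)) * (inner ℝ x y : ℝ)
        + ‖y‖ ^ (p - 2) * ‖y‖ ^ 2 := by
    simp only [inner_sub_left, inner_sub_right, real_inner_smul_left,
      real_inner_self_eq_norm_sq, real_inner_comm y x]
    ring
  have hns : ‖x - y‖ ^ (2 : ℝ) = ‖x‖ ^ 2 - 2 * (inner ℝ x y : ℝ) + ‖y‖ ^ 2 := by
    rw [Real.rpow_two, norm_sub_sq_real]
  rw [hinner, hns]
  exact key p ‖x‖ ‖y‖ (inner ℝ x y) hp1 hp2 (norm_nonneg x) (norm_nonneg y) hc hab
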